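/- arXiv:1407.0302 — 2 statements merged into one kernel-verified Lean document; each statement's English description precedes it below -/
import Mathlib

section
/- Let H be a group acting on a non-empty simple graph Γ, let A be a non-trivial group, and let G = A ≀_Γ H be the graph-wreath product. Then G is finitely generated if and only if both A and H are finitely generated and Γ has finitely many H-orbits of vertices. -/
universe u v

/-- A module `M` over `R` is of type `FP_n` if there is an exact sequence
`F_n → … → F_0 → M → 0` with each `F_i` a finitely generated free `R`-module. -/
def ModuleFP (R : Type u) [Semiring R] (n : ℕ) (M : Type v) [AddCommMonoid M]
    [Module R M] : Prop :=
  ∃ (k : ℕ → ℕ) (d : ∀ i : ℕ, ((Fin (k (i + 1)) → R) →ₗ[R] (Fin (k i) → R)))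
    (f : (Fin (k 0) → R) →ₗ[R] M),
    Function.Surjective f ∧
    (0 < n → LinearMap.ker f = LinearMap.range (d 0)) ∧
    (∀ i : ℕ, i + 2 ≤ n → LinearMap.ker (d i) = LinearMap.range (d (i + 1)))

/-- The trivial module structure of `J` over the group algebra `J[G]`,
via the augmentation homomorphism `J[G] → J`. -/
noncomputable def trivialModuleStruct (J : Type u) [CommRing J] (G : Type v) [Group G] :
    Module (MonoidAlgebra J G) J :=
  Module.compHom J ((MonoidAlgebra.lift J J G) 1).toRingHom

/-- A group `G` is of type `FP_n` over a commutative ring `J` if the trivial module `J`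
is of type `FP_n` over the group algebra `J[G]`. -/
def GroupFPOver (J : Type u) [CommRing J] (G : Type v) [Group G] (n : ℕ) : Prop :=
  @ModuleFP (MonoidAlgebra J G) _ n J _ (trivialModuleStruct J G)

/-- A group `G` is of type `FP_n` if the trivial module `ℤ` is of type `FP_n` over `ℤG`. -/
def GroupFP (G : Type v) [Group G] (n : ℕ) : Prop :=
  GroupFPOver ℤ G n

/-- A group is finitely presented if it is the quotient of a finitely generated free
group by the normal closure of finitely many relators. -/
def GroupFinitelyPresented (G : Type v) [Group G] : Prop :=
  ∃ (k : ℕ) (rels : Set (FreeGroup (Fin k))), rels.Finite ∧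
    Nonempty (PresentedGroup rels ≃* G)

/-- The permutation module `ℤX` of an `H`-set `X` is of type `FP_n` over `ℤH`. -/
def PermModuleFP (H : Type u) [Group H] (X : Type v) [MulAction H X] (n : ℕ) : Prop :=
  ModuleFP (MonoidAlgebra ℤ H) n (Representation.ofMulAction ℤ H X).asModule



section GraphProduct

variable (V : Type u) (A : Type v) [Group A] (Γ : SimpleGraph V)

/-- The commutation relators defining the graph product of copies of `A` over
the simple graph `Γ`: elements over adjacent vertices commute. -/
def GraphProductRels : Set (Monoid.CoprodI fun _ : V => A) :=
  {x | ∃ (u v : V) (a b : A), Γ.Adj u v ∧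
    x = Monoid.CoprodI.of (M := fun _ : V => A) (i := u) a *
        Monoid.CoprodI.of (M := fun _ : V => A) (i := v) b *
        (Monoid.CoprodI.of (M := fun _ : V => A) (i := u) a)⁻¹ *
        (Monoid.CoprodI.of (M := fun _ : V => A) (i := v) b)⁻¹}

/-- The graph product `A^Γ` of copies of the group `A` over the simple graph `Γ`:
the quotient of the free product of copies of `A` indexed by the vertices by the
relations making the copies at adjacent vertices commute elementwise. -/
def GraphProduct :=
  Monoid.CoprodI (fun _ : V => A) ⧸ Subgroup.normalClosure (GraphProductRels V A Γ)

instance : Group (GraphProduct V A Γ) :=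
  inferInstanceAs (Group (_ ⧸ _))

/-- The canonical homomorphism from the vertex group at `v` to the graph product. -/
def GraphProduct.of (v : V) : A →* GraphProduct V A Γ :=
  (QuotientGroup.mk' _).comp (Monoid.CoprodI.of (M := fun _ : V => A) (i := v))

end GraphProduct

section Cliques

variable (V : Type u) (H : Type w) [Group H] (Γ : SimpleGraph V) [MulAction H V]

/-- The `m`-cliques of the graph `Γ` (sets of `m` distinct pairwise adjacent vertices). -/
def Cliques (m : ℕ) := {s : Finset V // Γ.IsNClique m s}

/-- A group acting on the graph `Γ` acts on its `m`-cliques. -/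
noncomputable def cliqueMulAction
    (hadj : ∀ (h : H) (u v : V), Γ.Adj u v → Γ.Adj (h • u) (h • v)) (m : ℕ) :
    MulAction H (Cliques V Γ m) :=
  letI := Classical.decEq V
  {
  smul := fun h s => ⟨s.1.image (h • ·), by
    obtain ⟨hc, hcard⟩ := s.2
    constructor
    · rintro x hx y hy hxy
      simp only [Finset.coe_image, Set.mem_image, Finset.mem_coe] at hx hy
      obtain ⟨a, ha, rfl⟩ := hx
      obtain ⟨b, hb, rfl⟩ := hy
      exact hadj h a b (hc ha hb fun h' => hxy (by rw [h']))
    · rw [Finset.card_image_of_injective _ (MulAction.injective h), hcard]⟩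
  one_smul := fun s => Subtype.ext (by
    show s.1.image ((1 : H) • ·) = s.1
    simp)
  mul_smul := fun g h s => Subtype.ext (by
    show s.1.image ((g * h) • ·) = (s.1.image (h • ·)).image (g • ·)
    rw [Finset.image_image]
    exact Finset.image_congr fun x _ => (mul_smul g h x)) }

end Cliques

/-! If finitely many elements generate `A^Γ ⋊ H`, their `A^Γ`-components lie in the subgroup
generated by the elements `of u a` with `u` in a finite set `U` and `a` in a finite set `F`.
Once `U` is replaced by its `H`-saturation this subgroup is `H`-invariant, so together with `H`
it contains the generators and hence all of `A^Γ`. Projecting onto a single vertex group then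
shows that `F` generates `A`, and, since `A ≠ 1`, that every vertex lies in the saturation of `U`.
Conversely, `A^Γ ⋊ H` is generated by generators of `H` together with the elements `of r a` for
orbit representatives `r` and generators `a` of `A`, because the `H`-conjugates of the latter are
the elements `of v a` for all vertices `v`. -/

namespace SemidirectProduct

variable {N G : Type*} [Group N] [Group G] {φ : G →* MulAut N}

/-- The subgroup `M ⋊ G` of `N ⋊[φ] G`. -/
def subgroupOfInvariant (M : Subgroup N) (hM : ∀ (g : G), ∀ n ∈ M, φ g n ∈ M) :
    Subgroup (N ⋊[φ] G) where
  carrier := {x | x.left ∈ M}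
  one_mem' := M.one_mem
  mul_mem' {x y} hx hy := M.mul_mem hx (hM x.right y.left hy)
  inv_mem' {x} hx := hM x.right⁻¹ _ (M.inv_mem hx)

theorem left_mem_of_closure_eq_top {M : Subgroup N} (hM : ∀ (g : G), ∀ n ∈ M, φ g n ∈ M)
    {S : Set (N ⋊[φ] G)} (hS : Subgroup.closure S = ⊤) (hSM : ∀ x ∈ S, x.left ∈ M)
    (x : N ⋊[φ] G) : x.left ∈ M := by
  have : Subgroup.closure S ≤ subgroupOfInvariant M hM := (Subgroup.closure_le _).mpr hSM
  exact this (hS ▸ Subgroup.mem_top x)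

theorem closure_inl_union_inr_eq_top {T : Set N} {R : Set G}
    (hT : Subgroup.closure (⋃ g, φ g '' T) = ⊤) (hR : Subgroup.closure R = ⊤) :
    Subgroup.closure (inl '' T ∪ inr '' R : Set (N ⋊[φ] G)) = ⊤ := by
  set K := Subgroup.closure (inl '' T ∪ inr '' R : Set (N ⋊[φ] G))
  have hinr : ∀ g, inr g ∈ K := by
    have : (Subgroup.closure R).map inr ≤ K := by
      rw [MonoidHom.map_closure]
      exact Subgroup.closure_mono Set.subset_union_right
    exact fun g => this ⟨g, hR ▸ Subgroup.mem_top g, rfl⟩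
  have hinl : ∀ n, inl n ∈ K := by
    have : Subgroup.closure (⋃ g, φ g '' T) ≤ K.comap inl := by
      rw [Subgroup.closure_le]
      rintro _ ⟨_, ⟨g, rfl⟩, t, ht, rfl⟩
      rw [SetLike.mem_coe, Subgroup.mem_comap, inl_aut]
      exact K.mul_mem (K.mul_mem (hinr g)
        (Subgroup.subset_closure (Or.inl ⟨t, ht, rfl⟩))) (hinr g⁻¹)
    exact fun n => this (hT ▸ Subgroup.mem_top n)
  refine eq_top_iff.mpr fun x _ => ?_
  rw [← inl_left_mul_inr_right x]
  exact K.mul_mem (hinl x.left) (hinr x.right)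

end SemidirectProduct

namespace MulAction

theorem finite_orbitRel_quotient_iff {G α : Type*} [Group G] [MulAction G α] :
    Finite (orbitRel.Quotient G α) ↔
      ∃ U : Set α, U.Finite ∧ ∀ a, ∃ u ∈ U, a ∈ orbit G u := by
  constructor
  · intro _
    refine ⟨Set.range (Quotient.out : orbitRel.Quotient G α → α), Set.finite_range _,
      fun a => ⟨_, Set.mem_range_self ⟦a⟧, ?_⟩⟩
    exact mem_orbit_symm.mp (orbitRel_apply.mp (Quotient.mk_out a))
  · rintro ⟨U, hU, hUα⟩
    have := hU.to_subtype
    refine Finite.of_surjective (fun u : U => (⟦u.1⟧ : orbitRel.Quotient G α)) fun q => ?_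
    induction q using Quotient.inductionOn with
    | h a =>
      obtain ⟨u, hu, hau⟩ := hUα a
      exact ⟨⟨u, hu⟩, Quotient.sound (mem_orbit_symm.mp hau)⟩

end MulAction

namespace GraphProduct

variable {V A : Type*} [Group A] {Γ : SimpleGraph V}

@[elab_as_elim]
theorem induction_on {p : GraphProduct V A Γ → Prop} (g : GraphProduct V A Γ) (one : p 1)
    (of : ∀ v a, p (of V A Γ v a)) (mul : ∀ x y, p x → p y → p (x * y)) : p g := by
  obtain ⟨w, rfl⟩ := QuotientGroup.mk'_surjective _ g
  induction w using Monoid.CoprodI.induction_on with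
  | one => exact one
  | of v a => exact of v a
  | mul x y hx hy => exact mul _ _ hx hy

def lift {W : Type*} [Group W] (f : V → A →* W)
    (hf : ∀ u w, Γ.Adj u w → ∀ a b, Commute (f u a) (f w b)) : GraphProduct V A Γ →* W :=
  QuotientGroup.lift _ (Monoid.CoprodI.lift f) <|
    Subgroup.normalClosure_le_normal <| by
      rintro _ ⟨u, w, a, b, huw, rfl⟩
      simp only [SetLike.mem_coe, MonoidHom.mem_ker, map_mul, map_inv, Monoid.CoprodI.lift_of]
      rw [← commutatorElement_def, commutatorElement_eq_one_iff_commute]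
      exact hf u w huw a b

@[simp]
theorem lift_of {W : Type*} [Group W] (f : V → A →* W)
    (hf : ∀ u w, Γ.Adj u w → ∀ a b, Commute (f u a) (f w b)) (v : V) (a : A) :
    lift f hf (of V A Γ v a) = f v a :=
  Monoid.CoprodI.lift_of f a

open Classical in
noncomputable def proj (v : V) : GraphProduct V A Γ →* A :=
  lift (fun u => if u = v then MonoidHom.id A else 1) fun u w huw a b => by
    by_cases hu : u = v
    · subst hu
      simp [huw.ne.symm]
    · simp [hu]

@[simp]
theorem proj_of_self (v : V) (a : A) : proj (Γ := Γ) v (of V A Γ v a) = a := by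
  simp [proj]

theorem proj_of_of_ne {u v : V} (h : u ≠ v) (a : A) : proj (Γ := Γ) v (of V A Γ u a) = 1 := by
  simp [proj, h]

def vertexClosure (Γ : SimpleGraph V) (U : Set V) (F : Set A) : Subgroup (GraphProduct V A Γ) :=
  Subgroup.closure (Set.image2 (fun v a => of V A Γ v a) U F)

theorem of_mem_vertexClosure {U : Set V} {F : Set A} {v : V} {a : A} (hv : v ∈ U) (ha : a ∈ F) :
    of V A Γ v a ∈ vertexClosure Γ U F :=
  Subgroup.subset_closure (Set.mem_image2_of_mem hv ha)

theorem vertexClosure_le {U : Set V} {F : Set A} {K : Subgroup (GraphProduct V A Γ)} :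
    vertexClosure Γ U F ≤ K ↔ ∀ v ∈ U, ∀ a ∈ F, of V A Γ v a ∈ K :=
  Subgroup.closure_le K |>.trans Set.forall_mem_image2

theorem vertexClosure_mono {U U' : Set V} {F F' : Set A} (hU : U ⊆ U') (hF : F ⊆ F') :
    vertexClosure Γ U F ≤ vertexClosure Γ U' F' :=
  Subgroup.closure_mono (Set.image2_subset hU hF)

theorem vertexClosure_le_comap_proj (U : Set V) (F : Set A) (w : V) :
    vertexClosure Γ U F ≤ (Subgroup.closure F).comap (proj w) := by
  refine vertexClosure_le.mpr fun v _ a ha => ?_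
  rcases eq_or_ne v w with rfl | hvw
  · simpa using Subgroup.subset_closure ha
  · simp [proj_of_of_ne hvw]

theorem vertexClosure_le_ker_proj {U : Set V} (F : Set A) {w : V} (hw : w ∉ U) :
    vertexClosure Γ U F ≤ (proj w).ker :=
  vertexClosure_le.mpr fun _ hv a _ => proj_of_of_ne (ne_of_mem_of_not_mem hv hw) a

theorem vertexClosure_univ_eq_top {F : Set A} (hF : Subgroup.closure F = ⊤) :
    vertexClosure Γ Set.univ F = ⊤ := by
  refine eq_top_iff.mpr fun g _ => induction_on g (Subgroup.one_mem _) (fun v a => ?_)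
    fun _ _ => Subgroup.mul_mem _
  have : (Subgroup.closure F).map (of V A Γ v) ≤ vertexClosure Γ Set.univ F := by
    rw [MonoidHom.map_closure, Subgroup.closure_le]
    rintro _ ⟨b, hb, rfl⟩
    exact of_mem_vertexClosure (Set.mem_univ v) hb
  exact this ⟨a, hF ▸ Subgroup.mem_top a, rfl⟩

theorem exists_finite_mem_vertexClosure (g : GraphProduct V A Γ) :
    ∃ U : Set V, ∃ F : Set A, U.Finite ∧ F.Finite ∧ g ∈ vertexClosure Γ U F := by
  induction g using induction_on with
  | one => exact ⟨∅, ∅, Set.finite_empty, Set.finite_empty, Subgroup.one_mem _⟩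
  | of v a => exact ⟨{v}, {a}, Set.finite_singleton v, Set.finite_singleton a,
      of_mem_vertexClosure rfl rfl⟩
  | mul x y hx hy =>
    obtain ⟨U, F, hU, hF, hx⟩ := hx
    obtain ⟨U', F', hU', hF', hy⟩ := hy
    refine ⟨U ∪ U', F ∪ F', hU.union hU', hF.union hF', Subgroup.mul_mem _ ?_ ?_⟩
    · exact vertexClosure_mono Set.subset_union_left Set.subset_union_left hx
    · exact vertexClosure_mono Set.subset_union_right Set.subset_union_right hy

theorem exists_finite_subset_vertexClosure {L : Set (GraphProduct V A Γ)} (hL : L.Finite) :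
    ∃ U : Set V, ∃ F : Set A, U.Finite ∧ F.Finite ∧ L ⊆ vertexClosure Γ U F := by
  choose U F hU hF hg using exists_finite_mem_vertexClosure (V := V) (A := A) (Γ := Γ)
  refine ⟨⋃ g ∈ L, U g, ⋃ g ∈ L, F g, hL.biUnion fun g _ => hU g,
    hL.biUnion fun g _ => hF g, fun g hg' => vertexClosure_mono ?_ ?_ (hg g)⟩
  · exact Set.subset_biUnion_of_mem (u := U) hg'
  · exact Set.subset_biUnion_of_mem (u := F) hg'

section Action

variable {H : Type*} [Group H] [MulAction H V] {φ : H →* MulAut (GraphProduct V A Γ)}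

theorem aut_mem_vertexClosure
    (hφ : ∀ (h : H) (v : V) (a : A), φ h (of V A Γ v a) = of V A Γ (h • v) a)
    {U : Set V} (hU : ∀ (h : H), ∀ u ∈ U, h • u ∈ U) (F : Set A) (h : H)
    {g : GraphProduct V A Γ} (hg : g ∈ vertexClosure Γ U F) :
    φ h g ∈ vertexClosure Γ U F := by
  have : vertexClosure Γ U F ≤ (vertexClosure Γ U F).comap (φ h).toMonoidHom :=
    vertexClosure_le.mpr fun u hu a ha => by
      simpa [hφ] using of_mem_vertexClosure (Γ := Γ) (hU h u hu) ha
  exact this hg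

theorem vertexClosure_iUnion_orbit_eq_top
    (hφ : ∀ (h : H) (v : V) (a : A), φ h (of V A Γ v a) = of V A Γ (h • v) a)
    {S : Set (GraphProduct V A Γ ⋊[φ] H)} (hS : Subgroup.closure S = ⊤)
    {U : Set V} {F : Set A}
    (hSUF : SemidirectProduct.left '' S ⊆ vertexClosure Γ U F) :
    vertexClosure Γ (⋃ u ∈ U, MulAction.orbit H u) F = ⊤ := by
  have hinv : ∀ (h : H), ∀ w ∈ ⋃ u ∈ U, MulAction.orbit H u,
      h • w ∈ ⋃ u ∈ U, MulAction.orbit H u := by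
    simp only [Set.mem_iUnion₂]
    exact fun h w ⟨u, hu, hw⟩ => ⟨u, hu, MulAction.mem_orbit_of_mem_orbit h hw⟩
  have hUsub : U ⊆ ⋃ u ∈ U, MulAction.orbit H u :=
    fun u hu => Set.mem_biUnion hu (MulAction.mem_orbit_self u)
  refine eq_top_iff.mpr fun g _ => ?_
  exact SemidirectProduct.left_mem_of_closure_eq_top
    (fun h _ => aut_mem_vertexClosure hφ hinv F h) hS
    (fun x hx => vertexClosure_mono hUsub subset_rfl (hSUF ⟨x, hx, rfl⟩))
    (SemidirectProduct.inl g)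

theorem closure_iUnion_aut_image2_of
    (hφ : ∀ (h : H) (v : V) (a : A), φ h (of V A Γ v a) = of V A Γ (h • v) a)
    {R : Set V} (hR : ∀ v, ∃ r ∈ R, v ∈ MulAction.orbit H r) {F : Set A}
    (hF : Subgroup.closure F = ⊤) :
    Subgroup.closure (⋃ h, φ h '' Set.image2 (fun v a => of V A Γ v a) R F) = ⊤ := by
  refine eq_top_iff.mpr ((vertexClosure_univ_eq_top hF).ge.trans (vertexClosure_le.mpr ?_))
  rintro v - a ha
  obtain ⟨r, hr, h, rfl⟩ := hR v
  exact Subgroup.subset_closure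
    (Set.mem_iUnion.mpr ⟨h, _, Set.mem_image2_of_mem hr ha, hφ h r a⟩)

end Action

end GraphProduct

section GraphWreath

variable (V : Type u) (H : Type w) (A : Type v) [Group H] [Group A] [MulAction H V]
  [Nonempty V] (Γ : SimpleGraph V)

theorem graphWreath_fg_iff [Nontrivial A]
    (φ : H →* MulAut (GraphProduct V A Γ))
    (hφ : ∀ (h : H) (v : V) (a : A),
      φ h (GraphProduct.of V A Γ v a) = GraphProduct.of V A Γ (h • v) a) :
    Group.FG (GraphProduct V A Γ ⋊[φ] H) ↔
      (Group.FG A ∧ Group.FG H ∧ Finite (MulAction.orbitRel.Quotient H V)) := by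
  rw [MulAction.finite_orbitRel_quotient_iff]
  constructor
  · intro hG
    obtain ⟨S, hS, hSfin⟩ := Group.fg_iff.mp hG
    obtain ⟨U, F, hU, hF, hSUF⟩ :=
      GraphProduct.exists_finite_subset_vertexClosure (hSfin.image SemidirectProduct.left)
    have hof (v : V) (a : A) :
        GraphProduct.of V A Γ v a ∈
          GraphProduct.vertexClosure Γ (⋃ u ∈ U, MulAction.orbit H u) F :=
      GraphProduct.vertexClosure_iUnion_orbit_eq_top hφ hS hSUF ▸ Subgroup.mem_top _
    refine ⟨Group.fg_iff.mpr ⟨F, ?_, hF⟩,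
      Group.fg_of_surjective (hG := hG) SemidirectProduct.rightHom_surjective, U, hU, fun w => ?_⟩
    · refine eq_top_iff.mpr fun a _ => ?_
      obtain ⟨v₀⟩ : Nonempty V := inferInstance
      simpa using GraphProduct.vertexClosure_le_comap_proj _ F v₀ (hof v₀ a)
    · by_contra hw
      obtain ⟨a, ha⟩ := exists_ne (1 : A)
      have hwU : w ∉ ⋃ u ∈ U, MulAction.orbit H u := by simpa using hw
      simpa [ha] using GraphProduct.vertexClosure_le_ker_proj F hwU (hof w a)
  · rintro ⟨hA, hH, R, hR, hRV⟩
    obtain ⟨SA, hSA, hSAfin⟩ := Group.fg_iff.mp hA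
    obtain ⟨SH, hSH, hSHfin⟩ := Group.fg_iff.mp hH
    exact Group.fg_iff.mpr ⟨_, SemidirectProduct.closure_inl_union_inr_eq_top
      (GraphProduct.closure_iUnion_aut_image2_of hφ hRV hSA) hSH,
      ((hR.image2 _ hSAfin).image _).union (hSHfin.image _)⟩

end GraphWreath
end

section
/- For every n ≥ 1 and every finite subset S of R_n, the pointwise stabilizer {g ∈ H_n : g(s) = s for all s ∈ S} of S in the Houghton group H_n is isomorphic as a group to H_n. -/
/-!
Enumerating, ray by ray and in increasing order, the points outside `S` gives a bijection `E`
from `R_n` onto `R_n ∖ S`. Since `S` is finite, `E` is itself a translation far along each ray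
(by the number of points of `S` on that ray). Transporting a permutation `g` along `E` and letting
it fix `S` is an injective homomorphism `Perm R_n → Perm R_n` whose image is the pointwise fixer
of `S`; as `E ∘ g = g' ∘ E` with `E` an eventual translation, `g` is an eventual translation iff
its transport `g'` is. Hence the homomorphism maps `H_n` onto the stabilizer of `S` in `H_n`.
-/

/-- A permutation `g` of `R_n = {1,…,n} × ℕ` is an eventual translation if there are
integers `d 1, …, d n` such that, outside a finite set, `g (i, m) = (i, m + d i)`. -/
def IsEventualTranslation (n : ℕ) (g : Equiv.Perm (Fin n × ℕ)) : Prop :=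
  ∃ d : Fin n → ℤ,
    {x : Fin n × ℕ | ¬((g x).1 = x.1 ∧ ((g x).2 : ℤ) = (x.2 : ℤ) + d x.1)}.Finite

/-- The `n`-th Houghton group: the group of permutations of `R_n = {1,…,n} × ℕ` that
act as a translation far along each of the `n` rays. -/
def HoughtonGroup (n : ℕ) : Subgroup (Equiv.Perm (Fin n × ℕ)) where
  carrier := {g | IsEventualTranslation n g}
  one_mem' := ⟨0, by simp⟩
  mul_mem' := by
    rintro a b ⟨da, ha⟩ ⟨db, hb⟩
    refine ⟨fun i => db i + da i, Set.Finite.subset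
      (hb.union (ha.preimage (Function.Injective.injOn b.injective))) ?_⟩
    intro x hx
    by_contra hmem
    simp only [Set.mem_union, Set.mem_preimage, Set.mem_setOf_eq, not_or, not_not] at hmem
    obtain ⟨⟨hb1, hb2⟩, ⟨ha1, ha2⟩⟩ := hmem
    apply hx
    constructor
    · show (a (b x)).1 = x.1
      rw [ha1, hb1]
    · show ((a (b x)).2 : ℤ) = (x.2 : ℤ) + (db x.1 + da x.1)
      rw [ha2, hb1, hb2]
      ring
  inv_mem' := by
    rintro g ⟨d, hd⟩
    refine ⟨fun i => -d i, Set.Finite.subset (hd.image ⇑g) ?_⟩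
    intro x hx
    refine ⟨g⁻¹ x, fun hy => ?_, Equiv.apply_symm_apply g x⟩
    obtain ⟨h1, h2⟩ := hy
    rw [show g (g⁻¹ x) = x from Equiv.apply_symm_apply g x] at h1 h2
    refine hx ⟨h1.symm, ?_⟩
    rw [h1]
    beta_reduce
    omega

open Filter Function Set

variable {ι : Type*}

def EventuallyTranslatesBy (d : ι → ℤ) (f : ι × ℕ → ι × ℕ) : Prop :=
  ∀ᶠ x in cofinite, (f x).1 = x.1 ∧ ((f x).2 : ℤ) = x.2 + d x.1

theorem mem_houghtonGroup_iff {n : ℕ} {g : Equiv.Perm (Fin n × ℕ)} :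
    g ∈ HoughtonGroup n ↔ ∃ d, EventuallyTranslatesBy d g :=
  Iff.rfl

namespace EventuallyTranslatesBy

variable {c d : ι → ℤ} {f g : ι × ℕ → ι × ℕ}

theorem comp (hf : EventuallyTranslatesBy d f) (hg : EventuallyTranslatesBy c g)
    (hg_inj : Injective g) : EventuallyTranslatesBy (c + d) (f ∘ g) := by
  filter_upwards [hg, hg_inj.tendsto_cofinite.eventually hf] with x ⟨hg1, hg2⟩ ⟨hf1, hf2⟩
  refine ⟨hf1.trans hg1, ?_⟩
  simp only [comp_apply, Pi.add_apply, hf2, hg2, hg1]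
  ring

theorem of_comp_left (hfg : EventuallyTranslatesBy d (f ∘ g)) (hf : EventuallyTranslatesBy c f)
    (hg_inj : Injective g) : EventuallyTranslatesBy (d - c) g := by
  filter_upwards [hfg, hg_inj.tendsto_cofinite.eventually hf] with x ⟨h1, h2⟩ ⟨hf1, hf2⟩
  have hg1 : (g x).1 = x.1 := hf1.symm.trans h1
  simp only [comp_apply, hf2, hg1] at h2
  exact ⟨hg1, by simp only [Pi.sub_apply]; linarith⟩

theorem of_comp_right (hgf : EventuallyTranslatesBy d (g ∘ f)) (hf : EventuallyTranslatesBy c f)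
    (hf_inj : Injective f) (hf_range : (range f)ᶜ.Finite) : EventuallyTranslatesBy (d - c) g := by
  have hgood := hgf.and hf
  rw [← hf_inj.comap_cofinite_eq, eventually_comap] at hgood
  filter_upwards [hgood, hf_range.eventually_cofinite_notMem] with y hy hy_range
  obtain ⟨x, rfl⟩ : y ∈ range f := not_not.1 hy_range
  obtain ⟨⟨h1, h2⟩, hf1, hf2⟩ := hy x rfl
  simp only [comp_apply] at h1 h2
  refine ⟨h1.trans hf1.symm, ?_⟩
  rw [h2, hf2, hf1]
  simp only [Pi.sub_apply]
  ring

theorem exists_iff_of_semiconj {E h : ι × ℕ → ι × ℕ} (hE : EventuallyTranslatesBy c E)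
    (hE_inj : Injective E) (hE_range : (range E)ᶜ.Finite) (hg_inj : Injective g)
    (hEgh : Semiconj E g h) :
    (∃ d, EventuallyTranslatesBy d g) ↔ ∃ d, EventuallyTranslatesBy d h := by
  have hcomp : E ∘ g = h ∘ E := funext hEgh
  constructor
  · rintro ⟨d, hd⟩
    exact ⟨_, (hcomp ▸ hE.comp hd hg_inj).of_comp_right hE hE_inj hE_range⟩
  · rintro ⟨d, hd⟩
    exact ⟨_, (hcomp ▸ hd.comp hE hE_inj).of_comp_left hE hg_inj⟩

end EventuallyTranslatesBy

theorem Nat.nth_count_add_of_forall_le {p : ℕ → Prop} [DecidablePred p] {a : ℕ}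
    (hp : ∀ k, a ≤ k → p k) (j : ℕ) : Nat.nth p (Nat.count p a + j) = a + j := by
  have hcount : Nat.count p (a + j) = Nat.count p a + j := by
    rw [Nat.count_add, Nat.count_of_forall fun k _ => hp (a + k) (Nat.le_add_right a k)]
  rw [← hcount, Nat.nth_count (hp _ (Nat.le_add_right a j))]

theorem eventually_cofinite_le_snd [Finite ι] (B : ℕ) : ∀ᶠ x : ι × ℕ in cofinite, B ≤ x.2 :=
  eventually_cofinite.2 <|
    (finite_univ.prod (finite_Iio B)).subset fun _ hx => ⟨trivial, not_le.1 hx⟩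

section Enumeration

open scoped Classical

variable (S : Set (ι × ℕ))

noncomputable def enumCompl (x : ι × ℕ) : ι × ℕ :=
  (x.1, Nat.nth (fun m => (x.1, m) ∉ S) x.2)

variable {S}

theorem infinite_setOf_notMem_of_finite (hS : S.Finite) (i : ι) :
    {m : ℕ | (i, m) ∉ S}.Infinite :=
  (hS.preimage (Prod.mk_right_injective i).injOn).infinite_compl

theorem enumCompl_notMem (hS : S.Finite) (x : ι × ℕ) : enumCompl S x ∉ S :=
  Nat.nth_mem_of_infinite (infinite_setOf_notMem_of_finite hS x.1) x.2

theorem enumCompl_injective (hS : S.Finite) : Injective (enumCompl S) := by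
  rintro ⟨i, m⟩ ⟨j, k⟩ h
  obtain ⟨rfl, hmk⟩ := Prod.ext_iff.1 h
  exact Prod.ext rfl (Nat.nth_injective (infinite_setOf_notMem_of_finite hS i) hmk)

theorem range_enumCompl (hS : S.Finite) : range (enumCompl S) = Sᶜ := by
  refine Subset.antisymm (range_subset_iff.2 (enumCompl_notMem hS)) ?_
  rintro ⟨i, m⟩ hm
  exact ⟨(i, Nat.count (fun k => (i, k) ∉ S) m),
    Prod.ext rfl (Nat.nth_count (p := fun k => (i, k) ∉ S) hm)⟩

theorem exists_eventuallyTranslatesBy_enumCompl [Finite ι] (hS : S.Finite) :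
    ∃ c, EventuallyTranslatesBy c (enumCompl S) := by
  obtain ⟨B, hB⟩ := (hS.image Prod.snd).bddAbove
  have hray : ∀ i m, B < m → (i, m) ∉ S := fun i m hm hmem =>
    (hB (mem_image_of_mem Prod.snd hmem)).not_gt hm
  -- `c i` is the number of points of `S` on ray `i`
  refine ⟨fun i => (B + 1 : ℕ) - Nat.count (fun k => (i, k) ∉ S) (B + 1), ?_⟩
  filter_upwards [eventually_cofinite_le_snd (B + 1)] with ⟨i, m⟩ hm
  have hle : Nat.count (fun k => (i, k) ∉ S) (B + 1) ≤ m := (Nat.count_le _).trans hm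
  have hnth := Nat.nth_count_add_of_forall_le (p := fun k => (i, k) ∉ S) (hray i)
    (m - Nat.count (fun k => (i, k) ∉ S) (B + 1))
  rw [Nat.add_sub_cancel' hle] at hnth
  refine ⟨rfl, ?_⟩
  simp only [enumCompl, hnth]
  omega

noncomputable def enumComplEquiv (hS : S.Finite) : ι × ℕ ≃ ↥Sᶜ :=
  (Equiv.ofInjective _ (enumCompl_injective hS)).trans (Equiv.setCongr (range_enumCompl hS))

end Enumeration

theorem Equiv.Perm.exists_extendDomain_eq {α β : Type*} {p : β → Prop} [DecidablePred p]
    (f : α ≃ Subtype p) {h : Equiv.Perm β} (hh : ∀ b, ¬p b → h b = b) :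
    ∃ e : Equiv.Perm α, e.extendDomain f = h := by
  have hp : ∀ b, p (h b) ↔ p b := fun b => by
    by_cases hb : p b
    · refine iff_of_true (by_contra fun hhb => hhb ?_) hb
      rwa [h.injective (hh _ hhb)]
    · rw [hh b hb]
  refine ⟨f.symm.permCongr (h.subtypePerm hp), Equiv.ext fun b => ?_⟩
  by_cases hb : p b
  · simp [Equiv.Perm.extendDomain_apply_subtype _ _ hb]
  · rw [Equiv.Perm.extendDomain_apply_not_subtype _ _ hb, hh b hb]

open scoped Classical in
theorem map_extendDomainHom_houghtonGroup {n : ℕ} {S : Set (Fin n × ℕ)} (hS : S.Finite) :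
    (HoughtonGroup n).map (Equiv.Perm.extendDomainHom (enumComplEquiv hS)) =
      HoughtonGroup n ⊓ ⨅ x ∈ S, MulAction.stabilizer (Equiv.Perm (Fin n × ℕ)) x := by
  have hfix : ∀ h : Equiv.Perm (Fin n × ℕ),
      h ∈ ⨅ x ∈ S, MulAction.stabilizer (Equiv.Perm (Fin n × ℕ)) x ↔ ∀ x ∈ S, h x = x := by
    simp only [Subgroup.mem_iInf, MulAction.mem_stabilizer_iff, Equiv.Perm.smul_def, implies_true]
  obtain ⟨c, hc⟩ := exists_eventuallyTranslatesBy_enumCompl hS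
  have hmem : ∀ g : Equiv.Perm (Fin n × ℕ),
      g ∈ HoughtonGroup n ↔ g.extendDomain (enumComplEquiv hS) ∈ HoughtonGroup n := fun g => by
    rw [mem_houghtonGroup_iff, mem_houghtonGroup_iff]
    refine hc.exists_iff_of_semiconj (enumCompl_injective hS) ?_ g.injective fun x =>
      (g.extendDomain_apply_image (enumComplEquiv hS) x).symm
    rwa [range_enumCompl hS, compl_compl]
  ext h
  constructor
  · rintro ⟨g, hg, rfl⟩
    exact ⟨(hmem g).1 hg, (hfix _).2 fun x hx =>
      Equiv.Perm.extendDomain_apply_not_subtype _ _ (not_not.2 hx)⟩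
  · rintro ⟨hH, hS_fix⟩
    obtain ⟨g, rfl⟩ := Equiv.Perm.exists_extendDomain_eq (enumComplEquiv hS)
      fun x hx => (hfix h).1 hS_fix x (not_not.1 hx)
    exact ⟨g, (hmem g).2 hH, rfl⟩

theorem houghtonGroup_pointwise_stabilizer_iso_general (n : ℕ)
    (S : Set (Fin n × ℕ)) (hS : S.Finite) :
    Nonempty
      ((HoughtonGroup n ⊓ ⨅ x ∈ S, MulAction.stabilizer (Equiv.Perm (Fin n × ℕ)) x :
        Subgroup (Equiv.Perm (Fin n × ℕ))) ≃* HoughtonGroup n) := by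
  classical
  exact ⟨(MulEquiv.subgroupCongr (map_extendDomainHom_houghtonGroup hS).symm).trans
      ((HoughtonGroup n).equivMapOfInjective _ (Equiv.Perm.extendDomainHom_injective _)).symm⟩

/-- The pointwise stabilizer in the Houghton group `H_n` of a finite subset of
`R_n = {1,…,n} × ℕ` is isomorphic to `H_n` itself. -/
theorem houghtonGroup_pointwise_stabilizer_iso (n : ℕ) (hn : 1 ≤ n)
    (S : Set (Fin n × ℕ)) (hS : S.Finite) :
    Nonempty
      ((HoughtonGroup n ⊓ ⨅ x ∈ S, MulAction.stabilizer (Equiv.Perm (Fin n × ℕ)) x :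
        Subgroup (Equiv.Perm (Fin n × ℕ))) ≃* HoughtonGroup n) :=
  houghtonGroup_pointwise_stabilizer_iso_general n S hS
end
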